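/- Let Θ_1, Θ_2, Θ_3 be closed balls in ℝ² with centers b_i, and suppose some point u on the segment [b_1, b_2] lies in the interior of Θ_3 but outside Θ_1 and Θ_2. Then u is a global minimizer of H(x) = Σ_{i=1}^3 D(x;Θ_i), with H(u) = ‖b_1 − b_2‖ − s_1 − s_2. -/

import Mathlib

/-!
The distance to a closed ball `B(b; s)` is `max (‖x - b‖ - s) 0 ≥ ‖x - b‖ - s`, so by the
triangle inequality `H x ≥ ‖x - b₁‖ + ‖x - b₂‖ - s₁ - s₂ ≥ ‖b₁ - b₂‖ - s₁ - s₂`. At `u` both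
inequalities are equalities: `u` lies outside `Θ₁`, `Θ₂`, inside `Θ₃`, and on `[b₁, b₂]`.
-/

open Metric

theorem Metric.sub_le_infDist_closedBall {α : Type*} [PseudoMetricSpace α] (x b : α) {s : ℝ}
    (hs : 0 ≤ s) : dist x b - s ≤ infDist x (closedBall b s) :=
  (le_infDist (nonempty_closedBall.2 hs)).2 fun y hy => by
    linarith [dist_triangle x y b, mem_closedBall.1 hy]

theorem Metric.infDist_closedBall {E : Type*} [NormedAddCommGroup E] [NormedSpace ℝ E]
    (x b : E) {s : ℝ} (hs : 0 ≤ s) : infDist x (closedBall b s) = max (dist x b - s) 0 := by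
  refine le_antisymm ?_ (max_le (sub_le_infDist_closedBall x b hs) infDist_nonneg)
  rcases le_or_gt (dist x b) s with hx | hx
  · exact (infDist_zero_of_mem (mem_closedBall.2 hx)).trans_le (le_max_right _ _)
  -- the point of the ball nearest to `x` lies on the ray from `b` towards `x`
  set c := s / dist x b
  have hd : 0 < dist x b := hs.trans_lt hx
  have hc : c ≤ 1 := (div_le_one hd).2 hx.le
  have hy : AffineMap.lineMap b x c ∈ closedBall b s := by
    rw [mem_closedBall, dist_lineMap_left, Real.norm_of_nonneg (by positivity), dist_comm,
      div_mul_cancel₀ _ hd.ne']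
  calc infDist x (closedBall b s) ≤ dist x (AffineMap.lineMap b x c) :=
        infDist_le_dist_of_mem hy
    _ = dist x b - s := by
        rw [dist_comm, dist_lineMap_right, Real.norm_of_nonneg (sub_nonneg.2 hc), dist_comm,
          sub_mul, div_mul_cancel₀ _ hd.ne', one_mul]
    _ ≤ max (dist x b - s) 0 := le_max_left _ _

theorem fermat_torricelli_segment_minimizer_general
    (b : Fin 3 → EuclideanSpace ℝ (Fin 2)) (s : Fin 3 → ℝ) (hs : ∀ i, 0 ≤ s i)
    (H : EuclideanSpace ℝ (Fin 2) → ℝ)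
    (hH : ∀ x, H x = ∑ i : Fin 3, Metric.infDist x (Metric.closedBall (b i) (s i)))
    (u : EuclideanSpace ℝ (Fin 2)) (hu : u ∈ segment ℝ (b 0) (b 1))
    (hu3 : u ∈ interior (Metric.closedBall (b 2) (s 2)))
    (hu1 : u ∉ Metric.closedBall (b 0) (s 0)) (hu2 : u ∉ Metric.closedBall (b 1) (s 1)) :
    (∀ x, H u ≤ H x) ∧ H u = ‖b 0 - b 1‖ - s 0 - s 1 := by
  simp only [hH, Fin.sum_univ_three, infDist_closedBall _ _ (hs _)]
  rw [mem_closedBall, not_le] at hu1 hu2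
  have hu3 : dist u (b 2) ≤ s 2 := mem_closedBall.1 (interior_subset hu3)
  have hseg : dist (b 0) u + dist u (b 1) = dist (b 0) (b 1) := dist_add_dist_of_mem_segment hu
  have hHu : max (dist u (b 0) - s 0) 0 + max (dist u (b 1) - s 1) 0
      + max (dist u (b 2) - s 2) 0 = ‖b 0 - b 1‖ - s 0 - s 1 := by
    rw [max_eq_left (by linarith), max_eq_left (by linarith), max_eq_right (by linarith),
      ← dist_eq_norm, ← hseg, dist_comm (b 0)]
    ring
  refine ⟨fun x => ?_, hHu⟩
  rw [hHu, ← dist_eq_norm]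
  linarith [dist_triangle_left (b 0) (b 1) x, le_max_left (dist x (b 0) - s 0) 0,
    le_max_left (dist x (b 1) - s 1) 0, le_max_right (dist x (b 2) - s 2) 0]

/-- A point of the segment `[b₁, b₂]` lying in the interior of `Θ₃` but outside `Θ₁` and
`Θ₂` is a global minimizer of `H`, with value `‖b₁ − b₂‖ − s₁ − s₂`. -/
theorem fermat_torricelli_segment_minimizer
    (b : Fin 3 → EuclideanSpace ℝ (Fin 2)) (s : Fin 3 → ℝ) (hs : ∀ i, 0 ≤ s i)
    (hb : Function.Injective b)
    (H : EuclideanSpace ℝ (Fin 2) → ℝ)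
    (hH : ∀ x, H x = ∑ i : Fin 3, Metric.infDist x (Metric.closedBall (b i) (s i)))
    (u : EuclideanSpace ℝ (Fin 2)) (hu : u ∈ segment ℝ (b 0) (b 1))
    (hu3 : u ∈ interior (Metric.closedBall (b 2) (s 2)))
    (hu1 : u ∉ Metric.closedBall (b 0) (s 0)) (hu2 : u ∉ Metric.closedBall (b 1) (s 1)) :
    (∀ x, H u ≤ H x) ∧ H u = ‖b 0 - b 1‖ - s 0 - s 1 :=
  fermat_torricelli_segment_minimizer_general b s hs H hH u hu hu3 hu1 hu2
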